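/- (Parallel triangles in type E₇, §4.4.) Let (V₀, …, V₁₇) be any 18-gon of type E7 (the linear relations and central symmetry alone suffice; no convexity is needed) with inner points W_j = V_j + z_{j+5}. Then V₀ − W₁ = W₂ − W₄ and W₁ − W₃ = W₄ − V₅. Consequently, the triangles △_L with vertices (V₀, W₁, W₃) and △_R with vertices (W₂, W₄, V₅) are translates of one another: △_R = △_L + c with c = W₂ − V₀ = W₄ − W₁ = V₅ − W₃. -/
import Mathlib


noncomputable section

/-- The (strict) total order on `ℂ`: compare imaginary parts first, then real parts. -/
def cLt (a b : ℂ) : Prop := a.im < b.im ∨ (a.im = b.im ∧ a.re < b.re)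

/-- The corresponding non-strict order on `ℂ`. -/
def cLe (a b : ℂ) : Prop := cLt a b ∨ a = b

/-- `cross u v = Im (conj u * v)`. -/
def cross (u v : ℂ) : ℝ := ((starRingEnd ℂ) u * v).im

/-- A positively convex `h`-gon: every other vertex lies strictly to the left of each
directed edge from `V (j-1)` to `V j`. -/
def PosConvex {h : ℕ} (V : ZMod h → ℂ) : Prop :=
  ∀ j i : ZMod h, i ≠ j - 1 → i ≠ j →
    0 < cross (V j - V (j - 1)) (V i - V (j - 1))

/-- The (open) level-`s` diagonal-gon of an `h`-gon. -/
def DiagGon {h : ℕ} (V : ZMod h → ℂ) (s : ℕ) : Set ℂ :=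
  {P : ℂ | ∀ j : ZMod h, 0 < cross (V (j + (s : ZMod h)) - V j) (P - V j)}

/-- Edge vectors of an `h`-gon. -/
def zEdge {h : ℕ} (V : ZMod h → ℂ) (j : ZMod h) : ℂ := V j - V (j - 1)

/-- An 18-gon of type E7. -/
def IsE7Gon (V : ZMod 18 → ℂ) : Prop :=
  (∀ j : ZMod 18, V (j + 9) = -V j) ∧
  ∀ j : ZMod 18,
    zEdge V j + zEdge V (j + 1) + zEdge V (j + 6) + zEdge V (j + 7) +
      zEdge V (j + 12) + zEdge V (j + 13) = 0

/-- The inner points `W j` of an 18-gon of type E7. -/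
def WE7 (V : ZMod 18 → ℂ) (j : ZMod 18) : ℂ := V j + zEdge V (j + 5)

/-- A stable 18-gon of type E7. -/
def IsStableE7Gon (V : ZMod 18 → ℂ) : Prop :=
  IsE7Gon V ∧ PosConvex V ∧ ∀ j : ZMod 18, WE7 V j ∈ DiagGon V 4

/-- (Parallel triangles in type `E₇`, §4.4.) In any 18-gon of type `E7`,
`V 0 − W 1 = W 2 − W 4` and `W 1 − W 3 = W 4 − V 5`; hence the triangles
`△_L = (V 0, W 1, W 3)` and `△_R = (W 2, W 4, V 5)` are translates of one another. -/
theorem e7_parallel_triangles (V : ZMod 18 → ℂ) (hV : IsE7Gon V) :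
    V 0 - WE7 V 1 = WE7 V 2 - WE7 V 4 ∧
    WE7 V 1 - WE7 V 3 = WE7 V 4 - V 5 ∧
    ∃ c : ℂ, c = WE7 V 2 - V 0 ∧ c = WE7 V 4 - WE7 V 1 ∧ c = V 5 - WE7 V 3 ∧
      WE7 V 2 = V 0 + c ∧ WE7 V 4 = WE7 V 1 + c ∧ V 5 = WE7 V 3 + c := by
  obtain ⟨hs, hr⟩ := hV
  have h2 := hr 2
  have h3 := hr 3
  have s0 := hs 0
  have s1 := hs 1
  have s4 := hs 4
  have s5 := hs 5
  have s6 := hs 6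
  have s7 := hs 7
  norm_num at s0 s1 s4 s5 s6 s7
  have g1 : V 0 - WE7 V 1 = WE7 V 2 - WE7 V 4 := by
    simp only [zEdge, WE7] at h3 ⊢
    norm_num at h3 ⊢
    linear_combination h3 + s0 - s1 + s5 - s7
  have g2 : WE7 V 1 - WE7 V 3 = WE7 V 4 - V 5 := by
    simp only [zEdge, WE7] at h2 ⊢
    norm_num at h2 ⊢
    linear_combination -h2 + s6 - s4
  exact ⟨g1, g2, WE7 V 2 - V 0, rfl, by linear_combination -g1,
    by linear_combination -g1 - g2, by ring, by linear_combination g1,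
    by linear_combination g1 + g2⟩
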